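/- arXiv:2002.02561 — 7 statements merged into one kernel-verified Lean document; each statement's English description precedes it below -/
import Mathlib

section
/- Fix an integer M ≥ 1, real numbers λ_1, …, λ_M > 0, and λ > 0. For every real p ≥ 0 there exists exactly one real t > 0 satisfying the implicit equation t = Σ_{ρ=1}^M (1/λ_ρ + p/(λ + t))⁻¹. Moreover this unique solution t(p) satisfies t(p) ≤ Σ_{ρ=1}^M λ_ρ, with equality if and only if p = 0. -/
/-!
Write `F(t) = ∑ᵢ (1/aᵢ + p/(l + t))⁻¹`. Each summand lies in `(0, aᵢ]`, so `F(0) > 0` and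
`F(∑ aᵢ) ≤ ∑ aᵢ`, and the intermediate value theorem gives a fixed point in `(0, ∑ aᵢ]`.
For uniqueness, divide the equation by `l + t`: the left side `t / (l + t)` is strictly
increasing, while `F(t) / (l + t) = ∑ᵢ ((l + t)/aᵢ + p)⁻¹` is antitone, so the two sides meet
at most once. The summands equal `aᵢ` exactly when `p = 0`.
-/

open Finset Function

section InvOneDivAdd

variable {a x : ℝ}

theorem inv_one_div_add_pos (ha : 0 < a) (hx : 0 ≤ x) : 0 < (1 / a + x)⁻¹ := by
  positivity

theorem inv_one_div_add_le (ha : 0 < a) (hx : 0 ≤ x) : (1 / a + x)⁻¹ ≤ a := by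
  simpa only [one_div, inv_inv] using
    inv_anti₀ (by positivity) (le_add_of_nonneg_right hx : 1 / a ≤ 1 / a + x)

theorem inv_one_div_add_lt (ha : 0 < a) (hx : 0 < x) : (1 / a + x)⁻¹ < a := by
  simpa only [one_div, inv_inv] using
    inv_strictAnti₀ (by positivity) (lt_add_of_pos_right _ hx : 1 / a < 1 / a + x)

end InvOneDivAdd

theorem strictMonoOn_div_add {l : ℝ} (hl : 0 < l) :
    StrictMonoOn (fun t : ℝ => t / (l + t)) (Set.Ioi (-l)) := by
  intro s (hs : -l < s) t (ht : -l < t) hst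
  show s / (l + s) < t / (l + t)
  rw [div_lt_div_iff₀ (by linarith) (by linarith)]
  nlinarith

noncomputable def learningCurveMap {ι : Type*} [Fintype ι] (a : ι → ℝ) (l p t : ℝ) : ℝ :=
  ∑ i, (1 / a i + p / (l + t))⁻¹

namespace learningCurveMap

variable {ι : Type*} [Fintype ι] {a : ι → ℝ} {l p t : ℝ}

theorem pos [Nonempty ι] (ha : ∀ i, 0 < a i) (hp : 0 ≤ p) (ht : 0 ≤ l + t) :
    0 < learningCurveMap a l p t :=
  sum_pos (fun i _ => inv_one_div_add_pos (ha i) (div_nonneg hp ht)) univ_nonempty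

theorem le_sum (ha : ∀ i, 0 < a i) (hp : 0 ≤ p) (ht : 0 ≤ l + t) :
    learningCurveMap a l p t ≤ ∑ i, a i :=
  sum_le_sum fun i _ => inv_one_div_add_le (ha i) (div_nonneg hp ht)

theorem eq_sum_iff [Nonempty ι] (ha : ∀ i, 0 < a i) (hp : 0 ≤ p) (ht : 0 < l + t) :
    learningCurveMap a l p t = ∑ i, a i ↔ p = 0 := by
  refine ⟨fun h => ?_, fun h => by simp [learningCurveMap, h]⟩
  by_contra hp0
  have hlt : learningCurveMap a l p t < ∑ i, a i :=
    sum_lt_sum_of_nonempty univ_nonempty fun i _ =>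
      inv_one_div_add_lt (ha i) (div_pos (lt_of_le_of_ne hp (Ne.symm hp0)) ht)
  exact hlt.ne h

theorem continuousOn (ha : ∀ i, 0 < a i) (hp : 0 ≤ p) :
    ContinuousOn (learningCurveMap a l p) (Set.Ioi (-l)) := by
  refine continuousOn_finsetSum _ fun i _ => ContinuousOn.inv₀ ?_ fun t ht => ?_
  · exact continuousOn_const.add <| continuousOn_const.div (by fun_prop)
      fun t (ht : -l < t) => by linarith
  · have hlt : 0 < l + t := neg_lt_iff_pos_add'.mp ht
    exact (add_pos_of_pos_of_nonneg (one_div_pos.mpr (ha i)) (div_nonneg hp hlt.le)).ne'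

theorem div_eq_sum (ha : ∀ i, 0 < a i) (ht : 0 < l + t) :
    learningCurveMap a l p t / (l + t) = ∑ i, ((l + t) / a i + p)⁻¹ := by
  rw [learningCurveMap, sum_div]
  refine sum_congr rfl fun i _ => ?_
  have := (ha i).ne'
  rw [div_eq_mul_inv, ← mul_inv]
  congr 1
  field_simp

theorem div_antitoneOn (ha : ∀ i, 0 < a i) (hp : 0 ≤ p) :
    AntitoneOn (fun t => learningCurveMap a l p t / (l + t)) (Set.Ioi (-l)) := by
  intro s (hs : -l < s) t (ht : -l < t) hst
  have hls : 0 < l + s := by linarith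
  simp only [div_eq_sum ha hls, div_eq_sum ha (show 0 < l + t by linarith)]
  refine sum_le_sum fun i _ => inv_anti₀ (by have := ha i; positivity) ?_
  gcongr
  exact (ha i).le

theorem le_of_isFixedPt (hl : 0 < l) (ha : ∀ i, 0 < a i) (hp : 0 ≤ p) {s : ℝ}
    (hs : s ∈ Set.Ioi (-l)) (ht : t ∈ Set.Ioi (-l)) (hfs : IsFixedPt (learningCurveMap a l p) s)
    (hft : IsFixedPt (learningCurveMap a l p) t) : s ≤ t := by
  by_contra! hts
  have hlhs : t / (l + t) < s / (l + s) := strictMonoOn_div_add hl ht hs hts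
  have hrhs := div_antitoneOn ha hp ht hs hts.le
  simp only [hfs.eq, hft.eq] at hrhs
  exact hrhs.not_gt hlhs

theorem eq_of_isFixedPt (hl : 0 < l) (ha : ∀ i, 0 < a i) (hp : 0 ≤ p) {s : ℝ}
    (hs : s ∈ Set.Ioi (-l)) (ht : t ∈ Set.Ioi (-l)) (hfs : IsFixedPt (learningCurveMap a l p) s)
    (hft : IsFixedPt (learningCurveMap a l p) t) : s = t :=
  le_antisymm (le_of_isFixedPt hl ha hp hs ht hfs hft) (le_of_isFixedPt hl ha hp ht hs hft hfs)

theorem exists_pos_isFixedPt [Nonempty ι] (hl : 0 < l) (ha : ∀ i, 0 < a i) (hp : 0 ≤ p) :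
    ∃ t, 0 < t ∧ IsFixedPt (learningCurveMap a l p) t := by
  set S := ∑ i, a i
  have hS : 0 ≤ S := sum_nonneg fun i _ => (ha i).le
  have hcont : ContinuousOn (fun t => t - learningCurveMap a l p t) (Set.Icc 0 S) :=
    (continuousOn_id.sub (continuousOn ha hp)).mono fun t ht => by
      simp only [Set.mem_Ioi]; linarith [ht.1]
  have hneg_at_zero : 0 - learningCurveMap a l p 0 ≤ 0 := by
    linarith [pos ha hp (show 0 ≤ l + 0 by linarith)]
  have hnonneg_at_sum : 0 ≤ S - learningCurveMap a l p S := by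
    linarith [le_sum ha hp (show 0 ≤ l + S by linarith)]
  obtain ⟨t, ht, hzero⟩ := intermediate_value_Icc hS hcont ⟨hneg_at_zero, hnonneg_at_sum⟩
  have hfix : IsFixedPt (learningCurveMap a l p) t := (sub_eq_zero.mp hzero).symm
  exact ⟨t, hfix.eq ▸ pos ha hp (by linarith [ht.1]), hfix⟩

end learningCurveMap

/-- for eigenvalues `λ_ρ > 0`, ridge parameter `λ > 0` and any `p ≥ 0`,
the implicit learning-curve equation `t = Σ_ρ (1/λ_ρ + p/(λ + t))⁻¹` has exactly one
positive solution, and every positive solution satisfies `t ≤ Σ_ρ λ_ρ`, with equality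
iff `p = 0`. -/
theorem implicit_equation_unique_solution (M : ℕ) (hM : 0 < M)
    (lam : Fin M → ℝ) (hlam : ∀ ρ, 0 < lam ρ) (l : ℝ) (hl : 0 < l)
    (p : ℝ) (hp : 0 ≤ p) :
    (∃! t : ℝ, 0 < t ∧ t = ∑ ρ, (1 / lam ρ + p / (l + t))⁻¹) ∧
    ∀ t : ℝ, 0 < t → t = ∑ ρ, (1 / lam ρ + p / (l + t))⁻¹ →
      t ≤ (∑ ρ, lam ρ) ∧ (t = (∑ ρ, lam ρ) ↔ p = 0) := by
  have : Nonempty (Fin M) := ⟨⟨0, hM⟩⟩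
  obtain ⟨t₀, ht₀, hfix₀⟩ := learningCurveMap.exists_pos_isFixedPt hl hlam hp
  refine ⟨⟨t₀, ⟨ht₀, hfix₀.symm⟩, fun t ⟨ht, heq⟩ => ?_⟩, fun t ht heq => ?_⟩
  · have hmem : ∀ {x : ℝ}, 0 < x → x ∈ Set.Ioi (-l) := fun hx => Set.mem_Ioi.mpr (by linarith)
    exact learningCurveMap.eq_of_isFixedPt hl hlam hp (hmem ht) (hmem ht₀) heq.symm hfix₀
  · have hfix : IsFixedPt (learningCurveMap lam l p) t := heq.symm
    have hlt : 0 < l + t := add_pos hl ht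
    rw [← hfix.eq]
    exact ⟨learningCurveMap.le_sum hlam hp hlt.le, learningCurveMap.eq_sum_iff hlam hp hlt⟩
end

section
/- Fix an integer M ≥ 1, real numbers λ_1, …, λ_M > 0, and λ > 0, and for p ≥ 0 let t(p) > 0 solve the implicit equation t = Σ_{ρ=1}^M (1/λ_ρ + p/(λ + t))⁻¹, with γ(p) = Σ_ρ (1/λ_ρ + p/(λ + t(p)))⁻². Then p·γ(p) ≤ t(p)·(λ + t(p)) < (λ + t(p))². In particular 1 − p·γ(p)/(λ + t(p))² > 0, so the denominator appearing in the paper's mode error formula E_ρ(p) = (w̄_ρ²/λ_ρ) g_ρ(p)² (1 − p γ(p)/(λ + t(p))²)⁻¹ is strictly positive and each mode error is nonnegative. -/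
/-!
Since `p / (λ + t) ≤ 1/λ_ρ + p / (λ + t) = g_ρ⁻¹`, each `g_ρ` satisfies `p g_ρ ≤ λ + t`, hence
`p g_ρ² ≤ (λ + t) g_ρ`. Summing over `ρ` and using the fixed-point equation `t = Σ_ρ g_ρ` gives
`p γ ≤ (λ + t) t`, which is strictly less than `(λ + t)²` because `λ > 0`.
-/

open Finset

lemma mul_inv_sq_le_of_div_le {a s p : ℝ} (ha : 0 < a) (hs : 0 < s) (h : p / s ≤ a) :
    p * (a⁻¹) ^ 2 ≤ s * a⁻¹ := by
  have hp : p ≤ a * s := (div_le_iff₀ hs).mp h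
  calc p * (a⁻¹) ^ 2 ≤ a * s * (a⁻¹) ^ 2 := by gcongr
    _ = s * a⁻¹ := by field_simp

lemma mul_sum_inv_add_div_sq_le {ι : Type*} [Fintype ι] {c : ι → ℝ} (hc : ∀ i, 0 < c i)
    {p s : ℝ} (hp : 0 ≤ p) (hs : 0 < s) :
    p * ∑ i, ((c i + p / s)⁻¹) ^ 2 ≤ s * ∑ i, (c i + p / s)⁻¹ := by
  rw [mul_sum, mul_sum]
  refine sum_le_sum fun i _ => mul_inv_sq_le_of_div_le ?_ hs ?_
  · have := hc i
    positivity
  · linarith [hc i]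

theorem mode_error_denominator_positive_general (M : ℕ)
    (lam : Fin M → ℝ) (hlam : ∀ ρ, 0 < lam ρ) (l : ℝ) (hl : 0 < l)
    (p : ℝ) (hp : 0 ≤ p) (t : ℝ) (ht : 0 < t)
    (heq : t = ∑ ρ, (1 / lam ρ + p / (l + t))⁻¹) :
    let γ : ℝ := ∑ ρ, ((1 / lam ρ + p / (l + t))⁻¹) ^ 2
    p * γ ≤ t * (l + t) ∧
    t * (l + t) < (l + t) ^ 2 ∧
    0 < 1 - p * γ / (l + t) ^ 2 ∧
    ∀ (wbar : Fin M → ℝ) (ρ : Fin M),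
      0 ≤ (wbar ρ ^ 2 / lam ρ) * ((1 / lam ρ + p / (l + t))⁻¹) ^ 2
            * (1 - p * γ / (l + t) ^ 2)⁻¹ := by
  intro γ
  have hs : 0 < l + t := by positivity
  have hγ : p * γ ≤ t * (l + t) := by
    have h := mul_sum_inv_add_div_sq_le (fun ρ => one_div_pos.mpr (hlam ρ)) hp hs
    rw [← heq] at h
    exact h.trans_eq (mul_comm _ _)
  have hts : t * (l + t) < (l + t) ^ 2 := by
    rw [sq]
    exact mul_lt_mul_of_pos_right (by linarith) hs
  have hden : 0 < 1 - p * γ / (l + t) ^ 2 := by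
    rw [sub_pos, div_lt_one (by positivity)]
    exact hγ.trans_lt hts
  refine ⟨hγ, hts, hden, fun wbar ρ => mul_nonneg ?_ (inv_nonneg.mpr hden.le)⟩
  have := hlam ρ
  positivity

/-- at any positive solution `t` of the implicit learning-curve equation,
with `γ = Σ_ρ (1/λ_ρ + p/(λ+t))⁻²`, one has `p·γ ≤ t·(λ+t) < (λ+t)²`; in particular
`1 − p·γ/(λ+t)² > 0`, so the denominator in the mode error formula is strictly positive
and each mode error `E_ρ = (w̄_ρ²/λ_ρ) g_ρ² (1 − pγ/(λ+t)²)⁻¹` is nonnegative. -/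
theorem mode_error_denominator_positive (M : ℕ) (hM : 0 < M)
    (lam : Fin M → ℝ) (hlam : ∀ ρ, 0 < lam ρ) (l : ℝ) (hl : 0 < l)
    (p : ℝ) (hp : 0 ≤ p) (t : ℝ) (ht : 0 < t)
    (heq : t = ∑ ρ, (1 / lam ρ + p / (l + t))⁻¹) :
    let γ : ℝ := ∑ ρ, ((1 / lam ρ + p / (l + t))⁻¹) ^ 2
    p * γ ≤ t * (l + t) ∧
    t * (l + t) < (l + t) ^ 2 ∧
    0 < 1 - p * γ / (l + t) ^ 2 ∧
    ∀ (wbar : Fin M → ℝ) (ρ : Fin M),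
      0 ≤ (wbar ρ ^ 2 / lam ρ) * ((1 / lam ρ + p / (l + t))⁻¹) ^ 2
            * (1 - p * γ / (l + t) ^ 2)⁻¹ :=
  mode_error_denominator_positive_general M lam hlam l hl p hp t ht heq
end

section
/- Fix an integer M ≥ 1, real numbers λ_1, …, λ_M > 0, and λ > 0. Let U ⊆ [0,∞) × [0,∞) be (relatively) open and let t : U → (0,∞) be differentiable and satisfy t(p,v) = Σ_{ρ=1}^M (1/λ_ρ + v + p/(λ + t(p,v)))⁻¹ at every (p,v) ∈ U. Define g_ρ(p,v) = (1/λ_ρ + v + p/(λ + t(p,v)))⁻¹. Then Σ_ρ g_ρ(p,v) = t(p,v), and each g_ρ satisfies the quasi-linear partial differential equation ∂g_ρ/∂p = (λ + Σ_γ g_γ)⁻¹ · ∂g_ρ/∂v on U; in particular ∂t/∂p = (λ + t)⁻¹ ∂t/∂v. (This is Proposition 2 of the paper: the implicit solution obtained by the method of characteristics solves the learning-curve PDE.) -/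
/-!
Write `b = λ + t` and `u_ρ = 1/λ_ρ + v + p/b`, so that `g_ρ = u_ρ⁻¹`. All the `u_ρ` have the
same differential `Du = dv + b⁻¹ dp - (p/b²) dt`, and differentiating the implicit equation
`t = Σ_ρ u_ρ⁻¹` gives `dt = -S • Du` with `S = Σ_ρ u_ρ⁻²`. Hence `Du = dv + b⁻¹ dp + k • Du` with
`k = pS/b²`. On the characteristic direction `w = (1, -b⁻¹)` the first two terms cancel, so
`(1 - k) Du w = 0`, while evaluating at `(0, 1)` gives `(1 - k) Du (0, 1) = 1`, so `k ≠ 1` and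
`Du w = 0`. Therefore `dt` and every `dg_ρ = -u_ρ⁻² • Du` vanish on `w`, which is the PDE.
-/

open Set ContinuousLinearMap

theorem HasFDerivWithinAt.inv {𝕜 E : Type*} [NontriviallyNormedField 𝕜] [NormedAddCommGroup E]
    [NormedSpace 𝕜 E] {f : E → 𝕜} {f' : E →L[𝕜] 𝕜} {s : Set E} {x : E}
    (hf : HasFDerivWithinAt f f' s x) (hx : f x ≠ 0) :
    HasFDerivWithinAt (fun y => (f y)⁻¹) (-(f x ^ 2)⁻¹ • f') s x :=
  (hasDerivAt_inv hx).comp_hasFDerivWithinAt x hf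

theorem uniqueDiffOn_inter_Ici_prod_Ici {V : Set (ℝ × ℝ)} (hV : IsOpen V) (a b : ℝ) :
    UniqueDiffOn ℝ (V ∩ Ici a ×ˢ Ici b) := by
  rw [inter_comm]
  exact ((uniqueDiffOn_Ici a).prod (uniqueDiffOn_Ici b)).inter hV

theorem hasFDerivWithinAt_const_add_snd_add_fst_div {t : ℝ × ℝ → ℝ} {Dt : ℝ × ℝ →L[ℝ] ℝ}
    {s : Set (ℝ × ℝ)} {q : ℝ × ℝ} (c l : ℝ) (ht : HasFDerivWithinAt t Dt s q)
    (hb : l + t q ≠ 0) :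
    HasFDerivWithinAt (fun q' => c + q'.2 + q'.1 / (l + t q'))
      (snd ℝ ℝ ℝ + (l + t q)⁻¹ • fst ℝ ℝ ℝ - (q.1 / (l + t q) ^ 2) • Dt) s q := by
  simp only [div_eq_mul_inv]
  refine ((hasFDerivWithinAt_snd.const_add c).add
    (hasFDerivWithinAt_fst.mul ((ht.const_add l).inv hb))).congr_fderiv ?_
  ext <;> simp <;> ring

namespace ContinuousLinearMap

theorem apply_one_zero_eq_mul_iff (f : ℝ × ℝ →L[ℝ] ℝ) (a : ℝ) :
    f (1, 0) = a * f (0, 1) ↔ f (1, -a) = 0 := by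
  have hw : ((1 : ℝ), -a) = (1, 0) - a • (0, 1) := by ext <;> simp
  rw [hw, map_sub, map_smul, smul_eq_mul, sub_eq_zero]

theorem apply_one_neg_inv_eq_zero {D : ℝ × ℝ →L[ℝ] ℝ} {b k : ℝ}
    (hD : D = snd ℝ ℝ ℝ + b⁻¹ • fst ℝ ℝ ℝ + k • D) : D (1, -b⁻¹) = 0 := by
  have h01 : (1 - k) * D (0, 1) = 1 := by
    have := congrArg (· (0, 1)) hD
    simp only [add_apply, smul_apply, coe_snd', coe_fst', smul_eq_mul] at this
    linarith
  have hw : (1 - k) * D (1, -b⁻¹) = 0 := by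
    have := congrArg (· (1, -b⁻¹)) hD
    simp only [add_apply, smul_apply, coe_snd', coe_fst', smul_eq_mul] at this
    linarith
  exact (mul_eq_zero.1 hw).resolve_left (left_ne_zero_of_mul_eq_one h01)

end ContinuousLinearMap

theorem implicit_solution_solves_pde_general (M : ℕ)
    (lam : Fin M → ℝ) (hlam : ∀ ρ, 0 < lam ρ) (l : ℝ) (hl : 0 < l)
    (U : Set (ℝ × ℝ))
    (hU : ∃ V : Set (ℝ × ℝ), IsOpen V ∧ U = V ∩ (Set.Ici 0 ×ˢ Set.Ici 0))
    (t : ℝ × ℝ → ℝ) (htpos : ∀ q ∈ U, 0 < t q)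
    (Dt : ℝ × ℝ → (ℝ × ℝ) →L[ℝ] ℝ)
    (hder : ∀ q ∈ U, HasFDerivWithinAt t (Dt q) U q)
    (heq : ∀ q ∈ U, t q = ∑ ρ, (1 / lam ρ + q.2 + q.1 / (l + t q))⁻¹) :
    ∀ q ∈ U,
      ((∑ ρ, (1 / lam ρ + q.2 + q.1 / (l + t q))⁻¹) = t q) ∧
      (∀ ρ : Fin M, ∃ Dg : (ℝ × ℝ) →L[ℝ] ℝ,
        HasFDerivWithinAt (fun q' => (1 / lam ρ + q'.2 + q'.1 / (l + t q'))⁻¹) Dg U q ∧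
        Dg (1, 0) = (l + ∑ γ, (1 / lam γ + q.2 + q.1 / (l + t q))⁻¹)⁻¹ * Dg (0, 1)) ∧
      Dt q (1, 0) = (l + t q)⁻¹ * Dt q (0, 1) := by
  intro q hq
  obtain ⟨V, hV, rfl⟩ := hU
  have hp : 0 ≤ q.1 := hq.2.1
  have hv : 0 ≤ q.2 := hq.2.2
  have hb : 0 < l + t q := add_pos hl (htpos q hq)
  set u : Fin M → ℝ := fun ρ => 1 / lam ρ + q.2 + q.1 / (l + t q)
  have hu : ∀ ρ, 0 < u ρ := fun ρ => by have := hlam ρ; positivity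
  set Du := snd ℝ ℝ ℝ + (l + t q)⁻¹ • fst ℝ ℝ ℝ - (q.1 / (l + t q) ^ 2) • Dt q with hDu_def
  have hDg : ∀ ρ, HasFDerivWithinAt (fun q' => (1 / lam ρ + q'.2 + q'.1 / (l + t q'))⁻¹)
      (-(u ρ ^ 2)⁻¹ • Du) _ q := fun ρ =>
    (hasFDerivWithinAt_const_add_snd_add_fst_div _ l (hder q hq) hb.ne').inv (hu ρ).ne'
  have hDt : Dt q = -(∑ ρ, (u ρ ^ 2)⁻¹) • Du := by
    refine (uniqueDiffOn_inter_Ici_prod_Ici hV 0 0 q hq).eq (hder q hq) ?_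
    rw [← Finset.sum_neg_distrib, Finset.sum_smul]
    exact (HasFDerivWithinAt.fun_sum fun ρ _ => hDg ρ).congr heq (heq q hq)
  have hchar : Du (1, -(l + t q)⁻¹) = 0 := by
    refine apply_one_neg_inv_eq_zero (k := q.1 / (l + t q) ^ 2 * ∑ ρ, (u ρ ^ 2)⁻¹) ?_
    nth_rewrite 1 [hDu_def]
    rw [hDt]
    module
  have hsum : ∑ ρ, (u ρ)⁻¹ = t q := (heq q hq).symm
  refine ⟨hsum, fun ρ => ⟨_, hDg ρ, ?_⟩, ?_⟩
  · rw [hsum, apply_one_zero_eq_mul_iff, smul_apply, hchar, smul_zero]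
  · rw [apply_one_zero_eq_mul_iff, hDt, smul_apply, hchar, smul_zero]

/-- Proposition 2 of the paper: if `t(p,v) > 0` is differentiable on a
relatively open subset `U` of `[0,∞) × [0,∞)` and satisfies the implicit equation
`t = Σ_ρ (1/λ_ρ + v + p/(λ + t))⁻¹` on `U`, then with
`g_ρ(p,v) = (1/λ_ρ + v + p/(λ + t(p,v)))⁻¹` one has `Σ_ρ g_ρ = t`, and each `g_ρ`
satisfies the learning-curve PDE `∂g_ρ/∂p = (λ + Σ_γ g_γ)⁻¹ ∂g_ρ/∂v`; in particular
`∂t/∂p = (λ + t)⁻¹ ∂t/∂v`. -/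
theorem implicit_solution_solves_pde (M : ℕ) (hM : 0 < M)
    (lam : Fin M → ℝ) (hlam : ∀ ρ, 0 < lam ρ) (l : ℝ) (hl : 0 < l)
    (U : Set (ℝ × ℝ))
    (hU : ∃ V : Set (ℝ × ℝ), IsOpen V ∧ U = V ∩ (Set.Ici 0 ×ˢ Set.Ici 0))
    (t : ℝ × ℝ → ℝ) (htpos : ∀ q ∈ U, 0 < t q)
    (Dt : ℝ × ℝ → (ℝ × ℝ) →L[ℝ] ℝ)
    (hder : ∀ q ∈ U, HasFDerivWithinAt t (Dt q) U q)
    (heq : ∀ q ∈ U, t q = ∑ ρ, (1 / lam ρ + q.2 + q.1 / (l + t q))⁻¹) :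
    ∀ q ∈ U,
      ((∑ ρ, (1 / lam ρ + q.2 + q.1 / (l + t q))⁻¹) = t q) ∧
      (∀ ρ : Fin M, ∃ Dg : (ℝ × ℝ) →L[ℝ] ℝ,
        HasFDerivWithinAt (fun q' => (1 / lam ρ + q'.2 + q'.1 / (l + t q'))⁻¹) Dg U q ∧
        Dg (1, 0) = (l + ∑ γ, (1 / lam γ + q.2 + q.1 / (l + t q))⁻¹)⁻¹ * Dg (0, 1)) ∧
      Dt q (1, 0) = (l + t q)⁻¹ * Dt q (0, 1) :=
  implicit_solution_solves_pde_general M lam hlam l hl U hU t htpos Dt hder heq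
end

section
/- Fix an integer M ≥ 1, real numbers λ_1, …, λ_M > 0, and λ > 0. Suppose t : [0,∞) → (0,∞) is differentiable and satisfies t(p) = Σ_{ρ=1}^M (1/λ_ρ + p/(λ + t(p)))⁻¹ for all p ≥ 0, and set γ(p) = Σ_ρ (1/λ_ρ + p/(λ + t(p)))⁻². Then t′(p) = −(λ + t(p)) γ(p) / ((λ + t(p))² − p γ(p)) < 0 for all p ≥ 0; hence t is strictly decreasing and the map p ↦ p/(λ + t(p)) is strictly increasing. -/
/-!
Differentiating the implicit equation `t = ∑ ρ (1/λ_ρ + p/(λ + t))⁻¹` gives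
`t' = -γ (λ + t - p t') / (λ + t)²`, i.e. `t' ((λ + t)² - p γ) = -(λ + t) γ`. Since
`p (1/λ_ρ + p/(λ + t))⁻¹ ≤ λ + t` termwise, `p γ ≤ (λ + t) t < (λ + t)²`, so the factor
`(λ + t)² - p γ` is positive and `t'` is negative. Monotonicity of `t` follows by the mean value
theorem, and then `p/(λ + t(p))` increases because its numerator increases and its denominator
decreases.
-/

open Finset Set

lemma mul_inv_add_div_le {a p c : ℝ} (ha : 0 < a) (hp : 0 ≤ p) (hc : 0 < c) :
    p * (a + p / c)⁻¹ ≤ c := by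
  have hpc : p / c * c = p := div_mul_cancel₀ p hc.ne'
  rw [mul_inv_le_iff₀ (by positivity)]
  nlinarith

lemma mul_sum_inv_add_div_sq_lt_sq {ι : Type*} [Fintype ι] {a : ι → ℝ} (ha : ∀ i, 0 < a i)
    {p c : ℝ} (hp : 0 ≤ p) (hc : 0 < c) (hsum : ∑ i, (a i + p / c)⁻¹ < c) :
    p * ∑ i, ((a i + p / c)⁻¹) ^ 2 < c ^ 2 :=
  calc p * ∑ i, ((a i + p / c)⁻¹) ^ 2
      = ∑ i, p * (a i + p / c)⁻¹ * (a i + p / c)⁻¹ := by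
        rw [mul_sum]; exact sum_congr rfl fun i _ => by ring
    _ ≤ ∑ i, c * (a i + p / c)⁻¹ := by
        gcongr with i
        · have := ha i
          positivity
        · exact mul_inv_add_div_le (ha i) hp hc
    _ = c * ∑ i, (a i + p / c)⁻¹ := (mul_sum ..).symm
    _ < c ^ 2 := by rw [sq]; exact mul_lt_mul_of_pos_left hsum hc

lemma HasDerivWithinAt.sum_inv_add_div_const_add {ι : Type*} [Fintype ι] {a : ι → ℝ}
    {l : ℝ} {t : ℝ → ℝ} {t'p p : ℝ} {s : Set ℝ} (ht : HasDerivWithinAt t t'p s p)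
    (hc : l + t p ≠ 0) (ha : ∀ i, a i + p / (l + t p) ≠ 0) :
    HasDerivWithinAt (fun q => ∑ i, (a i + q / (l + t q))⁻¹)
      (-((l + t p - p * t'p) / (l + t p) ^ 2) * ∑ i, ((a i + p / (l + t p))⁻¹) ^ 2) s p := by
  have hdiv : HasDerivWithinAt (fun q => q / (l + t q))
      ((l + t p - p * t'p) / (l + t p) ^ 2) s p :=
    ((hasDerivWithinAt_id p s).fun_div (ht.const_add l) hc).congr_deriv (by simp)
  rw [mul_sum]
  exact HasDerivWithinAt.fun_sum fun i _ => ((hdiv.const_add (a i)).inv (ha i)).congr_deriv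
    (by rw [inv_pow, div_eq_mul_inv])

lemma deriv_eq_of_eq_sum_inv_add_div {ι : Type*} [Fintype ι] {a : ι → ℝ} {l : ℝ}
    {t : ℝ → ℝ} {t'p p : ℝ} {s : Set ℝ} (ht : HasDerivWithinAt t t'p s p)
    (hs : UniqueDiffWithinAt ℝ s p) (hp : p ∈ s)
    (heq : ∀ q ∈ s, t q = ∑ i, (a i + q / (l + t q))⁻¹)
    (hc : l + t p ≠ 0) (ha : ∀ i, a i + p / (l + t p) ≠ 0) :
    t'p * ((l + t p) ^ 2 - p * ∑ i, ((a i + p / (l + t p))⁻¹) ^ 2) =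
      -((l + t p) * ∑ i, ((a i + p / (l + t p))⁻¹) ^ 2) := by
  have hsum := (ht.sum_inv_add_div_const_add hc ha).congr heq (heq p hp)
  -- Abstracting `γ` keeps `field_simp` from clearing denominators inside the sum.
  set c := l + t p
  set γ := ∑ i, ((a i + p / c)⁻¹) ^ 2
  have huniq := hs.eq_deriv s ht hsum
  field_simp at huniq
  linear_combination huniq

lemma eq_neg_div_and_neg_of_eq_sum_inv_add_div {ι : Type*} [Fintype ι] [Nonempty ι]
    {a : ι → ℝ} (ha : ∀ i, 0 < a i) {l : ℝ} (hl : 0 < l) {t : ℝ → ℝ} {t'p p : ℝ} (hp : 0 ≤ p)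
    (htp : 0 < t p) (ht : HasDerivWithinAt t t'p (Ici 0) p)
    (heq : ∀ q ∈ Ici (0 : ℝ), t q = ∑ i, (a i + q / (l + t q))⁻¹) :
    t'p = -((l + t p) * (∑ i, ((a i + p / (l + t p))⁻¹) ^ 2) /
      ((l + t p) ^ 2 - p * ∑ i, ((a i + p / (l + t p))⁻¹) ^ 2)) ∧ t'p < 0 := by
  have hc : 0 < l + t p := by linarith
  have hapos : ∀ i, 0 < a i + p / (l + t p) := fun i => by
    have := ha i
    positivity
  have hγ : 0 < ∑ i, ((a i + p / (l + t p))⁻¹) ^ 2 :=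
    sum_pos (fun i _ => by have := hapos i; positivity) univ_nonempty
  have hden : 0 < (l + t p) ^ 2 - p * ∑ i, ((a i + p / (l + t p))⁻¹) ^ 2 := by
    refine sub_pos.2 (mul_sum_inv_add_div_sq_lt_sq ha hp hc ?_)
    linarith [heq p hp]
  have hformula := deriv_eq_of_eq_sum_inv_add_div ht (uniqueDiffOn_Ici 0 p hp) hp heq hc.ne'
    fun i => (hapos i).ne'
  rw [← eq_div_iff hden.ne', neg_div] at hformula
  exact ⟨hformula, hformula ▸ neg_neg_of_pos (by positivity)⟩

lemma strictMonoOn_id_div_of_antitoneOn {f : ℝ → ℝ} (hf : AntitoneOn f (Ici 0))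
    (hpos : ∀ p ∈ Ici (0 : ℝ), 0 < f p) : StrictMonoOn (fun p => p / f p) (Ici 0) :=
  fun a ha b hb hab =>
    calc a / f a ≤ a / f b := div_le_div_of_nonneg_left ha (hpos b hb) (hf ha hb hab.le)
      _ < b / f b := div_lt_div_of_pos_right hab (hpos b hb)

/-- if `t : [0,∞) → (0,∞)` is differentiable (with derivative `t'`) and
satisfies the implicit equation `t(p) = Σ_ρ (1/λ_ρ + p/(λ + t(p)))⁻¹` for all `p ≥ 0`,
then with `γ(p) = Σ_ρ (1/λ_ρ + p/(λ+t(p)))⁻²` one has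
`t'(p) = −(λ+t(p))γ(p)/((λ+t(p))² − pγ(p)) < 0`; hence `t` is strictly decreasing on
`[0,∞)` and `p ↦ p/(λ + t(p))` is strictly increasing on `[0,∞)`. -/
theorem t_strictly_decreasing (M : ℕ) (hM : 0 < M)
    (lam : Fin M → ℝ) (hlam : ∀ ρ, 0 < lam ρ) (l : ℝ) (hl : 0 < l)
    (t t' : ℝ → ℝ) (htpos : ∀ p ≥ (0 : ℝ), 0 < t p)
    (hder : ∀ p ≥ (0 : ℝ), HasDerivWithinAt t (t' p) (Set.Ici 0) p)
    (heq : ∀ p ≥ (0 : ℝ), t p = ∑ ρ, (1 / lam ρ + p / (l + t p))⁻¹) :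
    (∀ p ≥ (0 : ℝ),
      t' p = -((l + t p) * (∑ ρ, ((1 / lam ρ + p / (l + t p))⁻¹) ^ 2) /
                ((l + t p) ^ 2 - p * ∑ ρ, ((1 / lam ρ + p / (l + t p))⁻¹) ^ 2)) ∧
      t' p < 0) ∧
    StrictAntiOn t (Set.Ici 0) ∧
    StrictMonoOn (fun p => p / (l + t p)) (Set.Ici 0) := by
  have : NeZero M := ⟨hM.ne'⟩
  have hderiv : ∀ p ≥ (0 : ℝ), _ := fun p hp =>
    eq_neg_div_and_neg_of_eq_sum_inv_add_div (a := fun ρ => 1 / lam ρ)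
      (fun ρ => one_div_pos.2 (hlam ρ)) hl hp (htpos p hp) (hder p hp) heq
  have hanti : StrictAntiOn t (Ici 0) :=
    strictAntiOn_of_hasDerivWithinAt_neg (convex_Ici 0)
      (fun p hp => (hder p hp).continuousWithinAt)
      (fun p hp => (hder p (interior_subset hp)).mono interior_subset)
      fun p hp => (hderiv p (interior_subset hp)).2
  exact ⟨hderiv, hanti, strictMonoOn_id_div_of_antitoneOn (fun a ha b hb hab =>
    (add_le_add_iff_left l).2 (hanti.antitoneOn ha hb hab)) fun p hp => by linarith [htpos p hp]⟩
end

section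
/- Fix an integer M ≥ 1, real numbers λ_1, …, λ_M > 0, λ > 0, and target coefficients w̄_1, …, w̄_M with w̄_ρ ≠ 0 and w̄_γ ≠ 0 for two indices ρ, γ with λ_γ > λ_ρ. Suppose t : [0,∞) → (0,∞) is differentiable and satisfies t(p) = Σ_{σ=1}^M (1/λ_σ + p/(λ + t(p)))⁻¹ for all p ≥ 0. Then the ratio of mode errors E_ρ(p)/E_γ(p) is strictly increasing in p; equivalently, d/dp log E_ρ(p) > d/dp log E_γ(p) for all p ≥ 0. In this sense each marginal training data point causes a greater percent reduction in generalization error for modes with larger kernel eigenvalues. -/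
/-!
Everything is explicit in `κ(p) = p/(λ + t(p))`. The self-consistency equation reads
`t = Σ_σ (1/λ_σ + κ)⁻¹`, so `p = κ(λ + t) = Φ(κ)` with `Φ(x) = xλ + Σ_σ x/(1/λ_σ + x)`.
As `Φ' ≥ λ > 0`, `κ` is strictly increasing, and differentiating `Φ ∘ κ = id` gives `κ' > 0`.
In terms of `κ`, `E_ρ/E_γ = C ((1/λ_γ + κ)/(1/λ_ρ + κ))²`, which increases with `κ` since
`1/λ_γ < 1/λ_ρ`. The factor `(1 - pγ/(λ+t)²)⁻¹` common to all modes is positive, because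
`pγ/(λ+t)² = κ Σ_σ g_σ²/(λ+t)` and `κ g_σ < 1`; it cancels from
`(log E_ρ)' - (log E_γ)' = 2κ' (1/(1/λ_γ + κ) - 1/(1/λ_ρ + κ)) > 0`.
-/

/-- The theoretical mode error
`E_ρ(p) = (w̄_ρ²/λ_ρ) g_ρ(p)² (1 − pγ(p)/(λ+t(p))²)⁻¹` with
`g_ρ(p) = (1/λ_ρ + p/(λ+t(p)))⁻¹` and `γ(p) = Σ_σ g_σ(p)²`. -/
noncomputable def modeError {M : ℕ} (lam : Fin M → ℝ) (l : ℝ) (wbar : Fin M → ℝ)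
    (t : ℝ → ℝ) (ρ : Fin M) (p : ℝ) : ℝ :=
  (wbar ρ ^ 2 / lam ρ) * ((1 / lam ρ + p / (l + t p))⁻¹) ^ 2 *
    (1 - p * (∑ σ, ((1 / lam σ + p / (l + t p))⁻¹) ^ 2) / (l + t p) ^ 2)⁻¹

open Finset

noncomputable def kappa (l : ℝ) (t : ℝ → ℝ) (p : ℝ) : ℝ := p / (l + t p)

noncomputable def kappaInverse {ι : Type*} [Fintype ι] (c : ι → ℝ) (l x : ℝ) : ℝ :=
  x * l + ∑ σ, x / (c σ + x)

section
variable {ι : Type*} [Fintype ι] {c : ι → ℝ} {l : ℝ} {t : ℝ → ℝ} {p : ℝ}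

lemma hasDerivAt_kappaInverse {x : ℝ} (hx : ∀ σ, c σ + x ≠ 0) :
    HasDerivAt (kappaInverse c l) (l + ∑ σ, c σ / (c σ + x) ^ 2) x := by
  have hterm : ∀ σ, HasDerivAt (fun y => y / (c σ + y)) (c σ / (c σ + x) ^ 2) x := fun σ =>
    ((hasDerivAt_id x).div ((hasDerivAt_id x).const_add (c σ)) (hx σ)).congr_deriv
      (by simp only [id]; ring)
  have : HasDerivAt (kappaInverse c l) (1 * l + ∑ σ, c σ / (c σ + x) ^ 2) x :=
    ((hasDerivAt_id' x).mul_const l).fun_add (HasDerivAt.fun_sum fun σ (_ : σ ∈ univ) => hterm σ)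
  rwa [one_mul] at this

lemma strictMonoOn_kappaInverse (hc : ∀ σ, 0 < c σ) (hl : 0 < l) :
    StrictMonoOn (kappaInverse c l) (Set.Ici 0) := by
  have hne : ∀ x ∈ Set.Ici (0 : ℝ), ∀ σ, c σ + x ≠ 0 := fun x hx σ => by
    have := hc σ; have : (0 : ℝ) ≤ x := hx; positivity
  refine strictMonoOn_of_hasDerivWithinAt_pos (convex_Ici 0)
    (fun x hx => (hasDerivAt_kappaInverse (hne x hx)).continuousAt.continuousWithinAt)
    (fun x hx => (hasDerivAt_kappaInverse (hne x (interior_subset hx))).hasDerivWithinAt)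
    (fun x _ => add_pos_of_pos_of_nonneg hl (sum_nonneg fun σ _ => ?_))
  have := hc σ; positivity

lemma mul_sum_inv_sq_lt (hc : ∀ σ, 0 < c σ) (hl : 0 < l) {x : ℝ} (hx : 0 ≤ x) :
    x * ∑ σ, ((c σ + x)⁻¹) ^ 2 < l + ∑ σ, (c σ + x)⁻¹ := by
  have hterm : ∀ σ, x * ((c σ + x)⁻¹) ^ 2 ≤ (c σ + x)⁻¹ := fun σ => by
    have hcx : 0 < c σ + x := by have := hc σ; positivity
    rw [inv_pow, ← div_eq_mul_inv, div_le_iff₀ (by positivity), sq, ← mul_assoc,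
      inv_mul_cancel₀ hcx.ne', one_mul]
    linarith [hc σ]
  rw [mul_sum]
  linarith [sum_le_sum fun σ (_ : σ ∈ univ) => hterm σ]

lemma kappa_nonneg (hl : 0 < l) (hp : 0 ≤ p) (htp : 0 < t p) : 0 ≤ kappa l t p :=
  div_nonneg hp (by linarith)

lemma differentiableWithinAt_kappa {s : Set ℝ} (ht : DifferentiableWithinAt ℝ t s p)
    (hp : l + t p ≠ 0) : DifferentiableWithinAt ℝ (kappa l t) s p :=
  differentiableWithinAt_id.div (ht.const_add l) hp

lemma kappaInverse_kappa (hp : l + t p ≠ 0) (ht : t p = ∑ σ, (c σ + kappa l t p)⁻¹) :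
    kappaInverse c l (kappa l t p) = p := by
  simp only [kappaInverse, div_eq_mul_inv, ← mul_sum, ← mul_add, ← ht]
  exact div_mul_cancel₀ p hp

lemma strictMonoOn_kappa (hc : ∀ σ, 0 < c σ) (hl : 0 < l) (htpos : ∀ p ≥ (0 : ℝ), 0 < t p)
    (heq : ∀ p ≥ (0 : ℝ), t p = ∑ σ, (c σ + kappa l t p)⁻¹) :
    StrictMonoOn (kappa l t) (Set.Ici 0) := by
  intro p hp q hq hpq
  have hne : ∀ p ≥ (0 : ℝ), l + t p ≠ 0 := fun p hp => by linarith [htpos p hp]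
  rwa [← (strictMonoOn_kappaInverse hc hl).lt_iff_lt (kappa_nonneg hl hp (htpos p hp))
    (kappa_nonneg hl hq (htpos q hq)), kappaInverse_kappa (hne p hp) (heq p hp),
    kappaInverse_kappa (hne q hq) (heq q hq)]

lemma kappa_deriv_pos (hc : ∀ σ, 0 < c σ) (hl : 0 < l) (htpos : ∀ p ≥ (0 : ℝ), 0 < t p)
    (heq : ∀ p ≥ (0 : ℝ), t p = ∑ σ, (c σ + kappa l t p)⁻¹) (hp : 0 ≤ p) {κ' : ℝ}
    (hκ : HasDerivWithinAt (kappa l t) κ' (Set.Ici 0) p) : 0 < κ' := by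
  have hne : ∀ p ≥ (0 : ℝ), l + t p ≠ 0 := fun p hp => by linarith [htpos p hp]
  have hΦ := hasDerivAt_kappaInverse (l := l) fun σ =>
    (add_pos_of_pos_of_nonneg (hc σ) (kappa_nonneg hl hp (htpos p hp))).ne'
  have hid : HasDerivWithinAt (kappaInverse c l ∘ kappa l t) 1 (Set.Ici 0) p :=
    (hasDerivWithinAt_id p _).congr (fun q hq => kappaInverse_kappa (hne q hq) (heq q hq))
      (kappaInverse_kappa (hne p hp) (heq p hp))
  have hchain := (uniqueDiffOn_Ici 0 p hp).eq_deriv _ (hΦ.comp_hasDerivWithinAt p hκ) hid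
  refine pos_of_mul_pos_right (hchain ▸ one_pos) (add_pos_of_pos_of_nonneg hl ?_).le
  exact sum_nonneg fun σ _ => by have := hc σ; positivity

end

lemma strictMonoOn_add_div_add {a b : ℝ} (hab : a < b) :
    StrictMonoOn (fun x => (a + x) / (b + x)) (Set.Ioi (-b)) := by
  intro x hx y hy hxy
  have hx' : 0 < b + x := by linarith [Set.mem_Ioi.1 hx]
  have hy' : 0 < b + y := by linarith [Set.mem_Ioi.1 hy]
  rw [div_lt_div_iff₀ hx' hy']
  nlinarith

section
variable {M : ℕ} {lam : Fin M → ℝ} {l : ℝ} {wbar : Fin M → ℝ} {t : ℝ → ℝ} {p : ℝ}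

noncomputable def modeErrorDenom (lam : Fin M → ℝ) (l : ℝ) (t : ℝ → ℝ) (p : ℝ) : ℝ :=
  1 - p * (∑ σ, ((1 / lam σ + kappa l t p)⁻¹) ^ 2) / (l + t p) ^ 2

lemma modeError_eq (ρ : Fin M) (p : ℝ) :
    modeError lam l wbar t ρ p = wbar ρ ^ 2 / lam ρ * ((1 / lam ρ + kappa l t p)⁻¹) ^ 2 *
      (modeErrorDenom lam l t p)⁻¹ := rfl

lemma modeErrorDenom_pos (hlam : ∀ σ, 0 < lam σ) (hl : 0 < l) (hp : 0 ≤ p) (htp : 0 < t p)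
    (ht : t p = ∑ σ, (1 / lam σ + kappa l t p)⁻¹) : 0 < modeErrorDenom lam l t p := by
  have hA : 0 < l + t p := by linarith
  have key := mul_sum_inv_sq_lt (fun σ => one_div_pos.2 (hlam σ)) hl (kappa_nonneg hl hp htp)
  rw [← ht] at key
  rw [modeErrorDenom, sub_pos, div_lt_one (by positivity)]
  calc p * ∑ σ, ((1 / lam σ + kappa l t p)⁻¹) ^ 2
      = kappa l t p * (∑ σ, ((1 / lam σ + kappa l t p)⁻¹) ^ 2) * (l + t p) := by
        rw [kappa]; field_simp
    _ < (l + t p) * (l + t p) := mul_lt_mul_of_pos_right key hA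
    _ = (l + t p) ^ 2 := (sq _).symm

lemma differentiableWithinAt_modeErrorDenom {s : Set ℝ} (ht : DifferentiableWithinAt ℝ t s p)
    (hp : l + t p ≠ 0) (hg : ∀ σ, 1 / lam σ + kappa l t p ≠ 0) :
    DifferentiableWithinAt ℝ (modeErrorDenom lam l t) s p := by
  have hκ := differentiableWithinAt_kappa ht hp
  refine (differentiableWithinAt_const 1).sub ((differentiableWithinAt_id.mul ?_).div
    ((ht.const_add l).pow 2) (pow_ne_zero 2 hp))
  exact .fun_sum fun σ _ => ((hκ.const_add _).inv (hg σ)).pow 2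

lemma modeError_div_modeError {ρ γ : Fin M} (hlam : lam γ ≠ 0) (hw : wbar γ ≠ 0)
    (hD : modeErrorDenom lam l t p ≠ 0) :
    modeError lam l wbar t ρ p / modeError lam l wbar t γ p =
      wbar ρ ^ 2 / lam ρ * (lam γ / wbar γ ^ 2) *
        ((1 / lam γ + kappa l t p) / (1 / lam ρ + kappa l t p)) ^ 2 := by
  rw [modeError_eq, modeError_eq]
  field_simp

lemma log_modeError {τ : Fin M} (hlam : lam τ ≠ 0) (hw : wbar τ ≠ 0)
    (hg : 1 / lam τ + kappa l t p ≠ 0) (hD : modeErrorDenom lam l t p ≠ 0) :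
    Real.log (modeError lam l wbar t τ p) = Real.log (wbar τ ^ 2 / lam τ) -
      2 * Real.log (1 / lam τ + kappa l t p) - Real.log (modeErrorDenom lam l t p) := by
  rw [modeError_eq, Real.log_mul (by positivity) (by positivity), Real.log_mul (by positivity)
    (by positivity), Real.log_inv, Real.log_pow, Real.log_inv]
  push_cast
  ring

lemma hasDerivWithinAt_log_modeError (hlam : ∀ σ, 0 < lam σ) (hl : 0 < l)
    (htpos : ∀ p ≥ (0 : ℝ), 0 < t p)
    (heq : ∀ p ≥ (0 : ℝ), t p = ∑ σ, (1 / lam σ + kappa l t p)⁻¹) {τ : Fin M}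
    (hw : wbar τ ≠ 0) (hp : 0 ≤ p) {κ' D' : ℝ}
    (hκ : HasDerivWithinAt (kappa l t) κ' (Set.Ici 0) p)
    (hD : HasDerivWithinAt (modeErrorDenom lam l t) D' (Set.Ici 0) p) :
    HasDerivWithinAt (fun q => Real.log (modeError lam l wbar t τ q))
      (-(2 * (κ' / (1 / lam τ + kappa l t p))) - D' / modeErrorDenom lam l t p)
      (Set.Ici 0) p := by
  have hg : ∀ q ≥ (0 : ℝ), 0 < 1 / lam τ + kappa l t q := fun q hq =>
    add_pos_of_pos_of_nonneg (one_div_pos.2 (hlam τ)) (kappa_nonneg hl hq (htpos q hq))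
  have hDpos : ∀ q ≥ (0 : ℝ), 0 < modeErrorDenom lam l t q := fun q hq =>
    modeErrorDenom_pos hlam hl hq (htpos q hq) (heq q hq)
  have hlog : ∀ q ≥ (0 : ℝ), Real.log (modeError lam l wbar t τ q) =
      Real.log (wbar τ ^ 2 / lam τ) - 2 * Real.log (1 / lam τ + kappa l t q) -
        Real.log (modeErrorDenom lam l t q) := fun q hq =>
    log_modeError (hlam τ).ne' hw (hg q hq).ne' (hDpos q hq).ne'
  exact ((((hκ.const_add _).log (hg p hp).ne').const_mul 2).const_sub _).sub
    (hD.log (hDpos p hp).ne') |>.congr hlog (hlog p hp)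

end

theorem mode_error_ratio_increasing_general (M : ℕ)
    (lam : Fin M → ℝ) (hlam : ∀ σ, 0 < lam σ) (l : ℝ) (hl : 0 < l)
    (wbar : Fin M → ℝ) (ρ γ : Fin M) (hργ : lam ρ < lam γ)
    (hwρ : wbar ρ ≠ 0) (hwγ : wbar γ ≠ 0)
    (t t' : ℝ → ℝ) (htpos : ∀ p ≥ (0 : ℝ), 0 < t p)
    (hder : ∀ p ≥ (0 : ℝ), HasDerivWithinAt t (t' p) (Set.Ici 0) p)
    (heq : ∀ p ≥ (0 : ℝ), t p = ∑ σ, (1 / lam σ + p / (l + t p))⁻¹) :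
    StrictMonoOn (fun p => modeError lam l wbar t ρ p / modeError lam l wbar t γ p)
      (Set.Ici 0) ∧
    ∀ p ≥ (0 : ℝ), ∃ dρ dγ : ℝ,
      HasDerivWithinAt (fun q => Real.log (modeError lam l wbar t ρ q)) dρ (Set.Ici 0) p ∧
      HasDerivWithinAt (fun q => Real.log (modeError lam l wbar t γ q)) dγ (Set.Ici 0) p ∧
      dγ < dρ := by
  have hc : ∀ σ, 0 < 1 / lam σ := fun σ => one_div_pos.2 (hlam σ)
  have hinv : 1 / lam γ < 1 / lam ρ := one_div_lt_one_div_of_lt (hlam ρ) hργ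
  have hκ0 : ∀ p ≥ (0 : ℝ), 0 ≤ kappa l t p := fun p hp => kappa_nonneg hl hp (htpos p hp)
  have hD : ∀ p ≥ (0 : ℝ), 0 < modeErrorDenom lam l t p := fun p hp =>
    modeErrorDenom_pos hlam hl hp (htpos p hp) (heq p hp)
  refine ⟨fun p hp q hq hpq => ?_, fun p hp => ?_⟩
  · have hratio := fun p (hp : 0 ≤ p) =>
      modeError_div_modeError (wbar := wbar) (ρ := ρ) (hlam γ).ne' hwγ (hD p hp).ne'
    have hC : 0 < wbar ρ ^ 2 / lam ρ * (lam γ / wbar γ ^ 2) := by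
      have := hlam ρ; have := hlam γ; positivity
    have hκpq := strictMonoOn_kappa hc hl htpos heq hp hq hpq
    simp only [hratio p hp, hratio q hq]
    refine mul_lt_mul_of_pos_left (pow_lt_pow_left₀ ?_ ?_ two_ne_zero) hC
    · exact strictMonoOn_add_div_add hinv (Set.mem_Ioi.2 (by linarith [hc ρ, hκ0 p hp]))
        (Set.mem_Ioi.2 (by linarith [hc ρ, hκ0 q hq])) hκpq
    · have := hc γ; have := hc ρ; have := hκ0 p hp; positivity
  · have hA : l + t p ≠ 0 := by linarith [htpos p hp]
    have hκ := (differentiableWithinAt_kappa (hder p hp).differentiableWithinAt hA).hasDerivWithinAt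
    have hDd := (differentiableWithinAt_modeErrorDenom (lam := lam)
      (hder p hp).differentiableWithinAt hA fun σ => by linarith [hc σ, hκ0 p hp]).hasDerivWithinAt
    refine ⟨_, _, hasDerivWithinAt_log_modeError hlam hl htpos heq hwρ hp hκ hDd,
      hasDerivWithinAt_log_modeError hlam hl htpos heq hwγ hp hκ hDd, ?_⟩
    have hgγρ : 1 / lam γ + kappa l t p < 1 / lam ρ + kappa l t p := by linarith
    have := div_lt_div_of_pos_left (kappa_deriv_pos hc hl htpos heq hp hκ)
      (by linarith [hc γ, hκ0 p hp]) hgγρ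
    linarith

/-- for two modes `ρ, γ` with `λ_γ > λ_ρ` and nonzero target coefficients,
the ratio `E_ρ(p)/E_γ(p)` is strictly increasing in `p`; equivalently
`d/dp log E_ρ(p) > d/dp log E_γ(p)` for all `p ≥ 0`: the marginal training point
causes a greater percent reduction of the error of modes with larger eigenvalues. -/
theorem mode_error_ratio_increasing (M : ℕ) (hM : 0 < M)
    (lam : Fin M → ℝ) (hlam : ∀ σ, 0 < lam σ) (l : ℝ) (hl : 0 < l)
    (wbar : Fin M → ℝ) (ρ γ : Fin M) (hργ : lam ρ < lam γ)
    (hwρ : wbar ρ ≠ 0) (hwγ : wbar γ ≠ 0)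
    (t t' : ℝ → ℝ) (htpos : ∀ p ≥ (0 : ℝ), 0 < t p)
    (hder : ∀ p ≥ (0 : ℝ), HasDerivWithinAt t (t' p) (Set.Ici 0) p)
    (heq : ∀ p ≥ (0 : ℝ), t p = ∑ σ, (1 / lam σ + p / (l + t p))⁻¹) :
    StrictMonoOn (fun p => modeError lam l wbar t ρ p / modeError lam l wbar t γ p)
      (Set.Ici 0) ∧
    ∀ p ≥ (0 : ℝ), ∃ dρ dγ : ℝ,
      HasDerivWithinAt (fun q => Real.log (modeError lam l wbar t ρ q)) dρ (Set.Ici 0) p ∧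
      HasDerivWithinAt (fun q => Real.log (modeError lam l wbar t γ q)) dγ (Set.Ici 0) p ∧
      dγ < dρ :=
  mode_error_ratio_increasing_general M lam hlam l hl wbar ρ γ hργ hwρ hwγ t t' htpos hder heq
end

section
/- Fix an integer M ≥ 1, real numbers λ_1, …, λ_M > 0, λ > 0, and target coefficients w̄_1, …, w̄_M ∈ ℝ, and for each p ≥ 0 let t(p) > 0 be the unique solution of the implicit equation. Then, as p → ∞: t(p) → 0, p γ(p)/(λ + t(p))² → 0, and for each mode ρ, p² E_ρ(p) → λ² w̄_ρ²/λ_ρ; in particular every mode error decays asymptotically like p⁻². Consequently, for any modes ρ, γ with w̄_γ ≠ 0, the error ratio satisfies E_ρ(p)/E_γ(p) → (w̄_ρ²/λ_ρ)/(w̄_γ²/λ_γ) as p → ∞. -/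
open Filter

/-!
Each summand `(1/λ_ρ + p/(λ+t))⁻¹` of the implicit equation is at most `λ_ρ` and at most
`(λ+t)/p`. The first bound makes `t` bounded, and then the second gives `t(p) = O(1/p)`.
Hence `p g_ρ(p) = (1/(λ_ρ p) + 1/(λ+t(p)))⁻¹ → λ`, so `γ(p) = O(p⁻²)` and the correction
`pγ(p)/(λ+t(p))²` is `O(1/p)`; then `p² E_ρ(p) = (w̄_ρ²/λ_ρ) (p g_ρ(p))² (1 − pγ/(λ+t)²)⁻¹`
tends to `λ² w̄_ρ²/λ_ρ`, and the ratio of two mode errors is the ratio of these limits.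
-/

open Topology Finset

section Bounds

variable {ι : Type*} [Fintype ι] {lam : ι → ℝ}

theorem sum_inv_one_div_add_le_sum (hlam : ∀ ρ, 0 < lam ρ) {x : ℝ} (hx : 0 ≤ x) :
    ∑ ρ, (1 / lam ρ + x)⁻¹ ≤ ∑ ρ, lam ρ := by
  refine sum_le_sum fun ρ _ => ?_
  calc (1 / lam ρ + x)⁻¹ ≤ (1 / lam ρ)⁻¹ :=
        inv_anti₀ (one_div_pos.mpr (hlam ρ)) (le_add_of_nonneg_right hx)
    _ = lam ρ := by rw [one_div, inv_inv]

theorem sum_inv_one_div_add_le_card_div (hlam : ∀ ρ, 0 < lam ρ) {x : ℝ} (hx : 0 < x) :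
    ∑ ρ, (1 / lam ρ + x)⁻¹ ≤ Fintype.card ι / x := by
  calc ∑ ρ, (1 / lam ρ + x)⁻¹ ≤ ∑ _ρ : ι, x⁻¹ :=
        sum_le_sum fun ρ _ =>
          inv_anti₀ hx (le_add_of_nonneg_left (one_div_pos.mpr (hlam ρ)).le)
    _ = Fintype.card ι / x := by rw [sum_const, card_univ, nsmul_eq_mul, div_eq_mul_inv]

theorem tendsto_solution_atTop_zero (hlam : ∀ ρ, 0 < lam ρ) {l : ℝ} (hl : 0 < l)
    {t : ℝ → ℝ} (htpos : ∀ p ≥ (0 : ℝ), 0 < t p)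
    (heq : ∀ p ≥ (0 : ℝ), t p = ∑ ρ, (1 / lam ρ + p / (l + t p))⁻¹) :
    Tendsto t atTop (𝓝 0) := by
  set C := ∑ ρ, lam ρ
  have hbound : ∀ p > (0 : ℝ), t p ≤ Fintype.card ι * (l + C) / p := by
    intro p hp
    have hls : 0 < l + t p := add_pos hl (htpos p hp.le)
    have htC : t p ≤ C :=
      (heq p hp.le).trans_le (sum_inv_one_div_add_le_sum hlam (div_pos hp hls).le)
    calc t p ≤ Fintype.card ι / (p / (l + t p)) :=
          (heq p hp.le).trans_le (sum_inv_one_div_add_le_card_div hlam (div_pos hp hls))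
      _ = Fintype.card ι * (l + t p) / p := div_div_eq_mul_div _ _ _
      _ ≤ Fintype.card ι * (l + C) / p := by gcongr
  refine tendsto_of_tendsto_of_tendsto_of_le_of_le' tendsto_const_nhds
    ((tendsto_const_nhds (x := Fintype.card ι * (l + C))).div_atTop tendsto_id) ?_ ?_
  · filter_upwards [eventually_ge_atTop 0] with p hp using (htpos p hp).le
  · filter_upwards [eventually_gt_atTop 0] with p hp using hbound p hp

end Bounds

theorem tendsto_mul_inv_add_div {c q₀ : ℝ} {q : ℝ → ℝ} (hq : Tendsto q atTop (𝓝 q₀))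
    (hq₀ : q₀ ≠ 0) : Tendsto (fun p => p * (c + p / q p)⁻¹) atTop (𝓝 q₀) := by
  have hlim := ((tendsto_inv_atTop_zero.const_mul c).add (hq.inv₀ hq₀)).inv₀ (by simpa using hq₀)
  rw [mul_zero, zero_add, inv_inv] at hlim
  refine hlim.congr' ?_
  filter_upwards [eventually_ne_atTop 0] with p hp
  rw [← div_eq_mul_inv, ← inv_div]
  field_simp

theorem tendsto_mul_sum_sq_div_sq {ι : Type*} [Fintype ι] {f : ι → ℝ → ℝ} {L : ι → ℝ}
    {q : ℝ → ℝ} {q₀ : ℝ} (hf : ∀ σ, Tendsto (fun p => p * f σ p) atTop (𝓝 (L σ)))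
    (hq : Tendsto q atTop (𝓝 q₀)) (hq₀ : q₀ ≠ 0) :
    Tendsto (fun p => p * (∑ σ, f σ p ^ 2) / q p ^ 2) atTop (𝓝 0) := by
  have hlim := ((tendsto_finsetSum univ fun σ _ => (hf σ).pow 2).mul
    tendsto_inv_atTop_zero).div (hq.pow 2) (pow_ne_zero 2 hq₀)
  rw [mul_zero, zero_div] at hlim
  refine hlim.congr' ?_
  filter_upwards [eventually_ne_atTop 0] with p hp
  simp only [Pi.div_apply, mul_pow, ← mul_sum]
  field_simp

theorem tendsto_div_of_tendsto_sq_mul {f g : ℝ → ℝ} {a b : ℝ}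
    (hf : Tendsto (fun p => p ^ 2 * f p) atTop (𝓝 a))
    (hg : Tendsto (fun p => p ^ 2 * g p) atTop (𝓝 b)) (hb : b ≠ 0) :
    Tendsto (fun p => f p / g p) atTop (𝓝 (a / b)) := by
  refine (hf.div hg hb).congr' ?_
  filter_upwards [eventually_ne_atTop 0] with p hp
  exact mul_div_mul_left _ _ (pow_ne_zero 2 hp)

theorem tendsto_sq_mul_modeError {M : ℕ} {lam : Fin M → ℝ} {l : ℝ} (wbar : Fin M → ℝ)
    {t : ℝ → ℝ} {ρ : Fin M}
    (hg : Tendsto (fun p => p * (1 / lam ρ + p / (l + t p))⁻¹) atTop (𝓝 l))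
    (hcorr : Tendsto (fun p => p * (∑ σ, ((1 / lam σ + p / (l + t p))⁻¹) ^ 2) / (l + t p) ^ 2)
      atTop (𝓝 0)) :
    Tendsto (fun p => p ^ 2 * modeError lam l wbar t ρ p) atTop
      (𝓝 (l ^ 2 * wbar ρ ^ 2 / lam ρ)) := by
  have hlim := (tendsto_const_nhds (x := wbar ρ ^ 2 / lam ρ)).mul
    ((hg.pow 2).mul ((tendsto_const_nhds (x := (1 : ℝ)).sub hcorr).inv₀ (by norm_num)))
  rw [show l ^ 2 * wbar ρ ^ 2 / lam ρ = wbar ρ ^ 2 / lam ρ * (l ^ 2 * (1 - 0)⁻¹) by ring]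
  refine hlim.congr fun p => ?_
  simp only [modeError]
  ring

theorem mode_error_asymptotics_general (M : ℕ)
    (lam : Fin M → ℝ) (hlam : ∀ ρ, 0 < lam ρ) (l : ℝ) (hl : 0 < l)
    (wbar : Fin M → ℝ) (t : ℝ → ℝ)
    (htpos : ∀ p ≥ (0 : ℝ), 0 < t p)
    (heq : ∀ p ≥ (0 : ℝ), t p = ∑ ρ, (1 / lam ρ + p / (l + t p))⁻¹) :
    Tendsto t atTop (nhds 0) ∧
    Tendsto (fun p => p * (∑ σ, ((1 / lam σ + p / (l + t p))⁻¹) ^ 2) / (l + t p) ^ 2)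
      atTop (nhds 0) ∧
    (∀ ρ : Fin M,
      Tendsto (fun p => p ^ 2 * modeError lam l wbar t ρ p) atTop
        (nhds (l ^ 2 * wbar ρ ^ 2 / lam ρ))) ∧
    (∀ ρ γ : Fin M, wbar γ ≠ 0 →
      Tendsto (fun p => modeError lam l wbar t ρ p / modeError lam l wbar t γ p) atTop
        (nhds ((wbar ρ ^ 2 / lam ρ) / (wbar γ ^ 2 / lam γ)))) := by
  have ht := tendsto_solution_atTop_zero hlam hl htpos heq
  have hlt : Tendsto (fun p => l + t p) atTop (𝓝 l) := by simpa using ht.const_add l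
  have hg σ := tendsto_mul_inv_add_div (c := 1 / lam σ) hlt hl.ne'
  have hcorr := tendsto_mul_sum_sq_div_sq hg hlt hl.ne'
  have hE ρ := tendsto_sq_mul_modeError wbar (hg ρ) hcorr
  refine ⟨ht, hcorr, hE, fun ρ γ hwγ => ?_⟩
  have hl2 : l ^ 2 ≠ 0 := pow_ne_zero 2 hl.ne'
  have hlim := tendsto_div_of_tendsto_sq_mul (hE ρ) (hE γ)
    (div_ne_zero (mul_ne_zero hl2 (pow_ne_zero 2 hwγ)) (hlam γ).ne')
  simpa only [mul_div_assoc, mul_div_mul_left _ _ hl2] using hlim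

/-- along the positive solution `t(p)` of the implicit equation, as
`p → ∞`: `t(p) → 0`, `pγ(p)/(λ+t(p))² → 0`, `p²E_ρ(p) → λ²w̄_ρ²/λ_ρ` for each mode
(so every mode error decays like `p⁻²`), and `E_ρ(p)/E_γ(p) → (w̄_ρ²/λ_ρ)/(w̄_γ²/λ_γ)`
whenever `w̄_γ ≠ 0`. -/
theorem mode_error_asymptotics (M : ℕ) (hM : 0 < M)
    (lam : Fin M → ℝ) (hlam : ∀ ρ, 0 < lam ρ) (l : ℝ) (hl : 0 < l)
    (wbar : Fin M → ℝ) (t : ℝ → ℝ)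
    (htpos : ∀ p ≥ (0 : ℝ), 0 < t p)
    (heq : ∀ p ≥ (0 : ℝ), t p = ∑ ρ, (1 / lam ρ + p / (l + t p))⁻¹) :
    Tendsto t atTop (nhds 0) ∧
    Tendsto (fun p => p * (∑ σ, ((1 / lam σ + p / (l + t p))⁻¹) ^ 2) / (l + t p) ^ 2)
      atTop (nhds 0) ∧
    (∀ ρ : Fin M,
      Tendsto (fun p => p ^ 2 * modeError lam l wbar t ρ p) atTop
        (nhds (l ^ 2 * wbar ρ ^ 2 / lam ρ))) ∧
    (∀ ρ γ : Fin M, wbar γ ≠ 0 →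
      Tendsto (fun p => modeError lam l wbar t ρ p / modeError lam l wbar t γ p) atTop
        (nhds ((wbar ρ ^ 2 / lam ρ) / (wbar γ ^ 2 / lam γ)))) :=
  mode_error_asymptotics_general M lam hlam l hl wbar t htpos heq
end

section
/- Let a, b be real numbers with b > 0, a > 1, and a − 1 < 2b. For s > 0 define I(s) = ∫₁^∞ ρ^{−a} (1 + s ρ^{−b})^{−2} dρ. Then the integral C = ∫₀^∞ u^{−a}(1 + u^{−b})^{−2} du is finite, and lim_{s→∞} s^{(a−1)/b} · I(s) = C. In particular, I(s) decays like s^{−(a−1)/b} as s → ∞. -/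
/-!
The substitution `ρ = s^{1/b} u` turns `s^{(a-1)/b} I(s)` into the integral of
`u^{-a}(1 + u^{-b})^{-2}` over `(s^{-1/b}, ∞)`. That integrand is at most `u^{-a}` near `∞` and
at most `u^{2b-a}` near `0`, so it is integrable on `(0, ∞)` as soon as `1 < a` and
`a - 1 < 2b`; the truncated integrals then converge to the full one as the cut-off
`s^{-1/b}` tends to `0`.
-/

open MeasureTheory Filter Set Topology

namespace PowerLawLearningCurve

noncomputable def powerLawIntegrand (a b u : ℝ) : ℝ := u ^ (-a) * ((1 + u ^ (-b)) ^ 2)⁻¹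

variable {a b : ℝ}

lemma powerLawIntegrand_nonneg {u : ℝ} (hu : 0 ≤ u) : 0 ≤ powerLawIntegrand a b u := by
  have := Real.rpow_nonneg hu (-b)
  unfold powerLawIntegrand
  positivity

lemma continuousOn_powerLawIntegrand : ContinuousOn (powerLawIntegrand a b) (Ioi 0) := by
  intro u (hu : 0 < u)
  have hden : (1 + u ^ (-b)) ^ 2 ≠ 0 := by
    have := Real.rpow_nonneg hu.le (-b)
    positivity
  exact ((Real.continuousAt_rpow_const u _ (.inl hu.ne')).mul
    (((continuousAt_const.add (Real.continuousAt_rpow_const u _ (.inl hu.ne'))).pow 2).inv₀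
      hden)).continuousWithinAt

lemma powerLawIntegrand_le_rpow_neg {u : ℝ} (hu : 0 ≤ u) :
    powerLawIntegrand a b u ≤ u ^ (-a) := by
  have hub := Real.rpow_nonneg hu (-b)
  refine mul_le_of_le_one_right (Real.rpow_nonneg hu _) (inv_le_one_of_one_le₀ ?_)
  nlinarith

lemma powerLawIntegrand_le_rpow_sub {u : ℝ} (hu : 0 < u) :
    powerLawIntegrand a b u ≤ u ^ (2 * b - a) := by
  have hub := Real.rpow_pos_of_pos hu (-b)
  calc powerLawIntegrand a b u ≤ u ^ (-a) * ((u ^ (-b)) ^ 2)⁻¹ := by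
        unfold powerLawIntegrand
        gcongr
        linarith
    _ = u ^ (2 * b - a) := by
        rw [← Real.rpow_natCast, ← Real.rpow_mul hu.le, ← Real.rpow_neg hu.le,
          ← Real.rpow_add hu]
        ring_nf

lemma integrableOn_powerLawIntegrand_Ioi_one (ha : 1 < a) :
    IntegrableOn (powerLawIntegrand a b) (Ioi 1) := by
  have hsub : Ioi (1 : ℝ) ⊆ Ioi 0 := Ioi_subset_Ioi zero_le_one
  refine (integrableOn_Ioi_rpow_of_lt (neg_lt_neg ha) one_pos).mono'
    ((continuousOn_powerLawIntegrand.mono hsub).aestronglyMeasurable measurableSet_Ioi) ?_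
  filter_upwards [self_mem_ae_restrict measurableSet_Ioi] with u (hu : 1 < u)
  rw [Real.norm_of_nonneg (powerLawIntegrand_nonneg (by linarith))]
  exact powerLawIntegrand_le_rpow_neg (by linarith)

lemma integrableOn_powerLawIntegrand_Ioc_zero_one (hab : a - 1 < 2 * b) :
    IntegrableOn (powerLawIntegrand a b) (Ioc 0 1) := by
  have hdom : IntegrableOn (fun u : ℝ ↦ u ^ (2 * b - a)) (Ioc 0 1) :=
    (intervalIntegrable_iff_integrableOn_Ioc_of_le zero_le_one).1
      (intervalIntegral.intervalIntegrable_rpow' (by linarith))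
  have hsub : Ioc (0 : ℝ) 1 ⊆ Ioi 0 := fun _ hx ↦ hx.1
  refine hdom.mono' ((continuousOn_powerLawIntegrand.mono hsub).aestronglyMeasurable
    measurableSet_Ioc) ?_
  filter_upwards [self_mem_ae_restrict measurableSet_Ioc] with u hu
  rw [Real.norm_of_nonneg (powerLawIntegrand_nonneg hu.1.le)]
  exact powerLawIntegrand_le_rpow_sub hu.1

lemma integrableOn_powerLawIntegrand (ha : 1 < a) (hab : a - 1 < 2 * b) :
    IntegrableOn (powerLawIntegrand a b) (Ioi 0) := by
  rw [← Ioc_union_Ioi_eq_Ioi zero_le_one]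
  exact (integrableOn_powerLawIntegrand_Ioc_zero_one hab).union
    (integrableOn_powerLawIntegrand_Ioi_one ha)

lemma powerLawIntegrand_inv_mul {c ρ : ℝ} (hc : 0 < c) (hρ : 0 ≤ ρ) :
    powerLawIntegrand a b (c⁻¹ * ρ) = c ^ a * (ρ ^ (-a) * ((1 + c ^ b * ρ ^ (-b)) ^ 2)⁻¹) := by
  have hc' : ∀ y : ℝ, c⁻¹ ^ (-y) = c ^ y := fun y ↦ by
    rw [Real.inv_rpow hc.le, Real.rpow_neg hc.le, inv_inv]
  simp only [powerLawIntegrand, Real.mul_rpow (inv_nonneg.2 hc.le) hρ, hc']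
  ring

lemma rpow_mul_integral_Ioi_one_eq (a : ℝ) (hb : b ≠ 0) {s : ℝ} (hs : 0 < s) :
    s ^ ((a - 1) / b) * ∫ ρ in Ioi (1 : ℝ), ρ ^ (-a) * ((1 + s * ρ ^ (-b)) ^ 2)⁻¹ =
      ∫ u in Ioi (s ^ (-b⁻¹)), powerLawIntegrand a b u := by
  set c := s ^ b⁻¹ with hc_def
  have hc : 0 < c := Real.rpow_pos_of_pos hs _
  have hcb : c ^ b = s := Real.rpow_inv_rpow hs.le hb
  have hexp : s ^ ((a - 1) / b) = c⁻¹ * c ^ a := by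
    rw [div_eq_inv_mul, Real.rpow_mul hs.le, ← hc_def, Real.rpow_sub_one hc.ne', div_eq_inv_mul]
  rw [Real.rpow_neg hs.le, ← hc_def, ← mul_one c⁻¹,
    ← integral_comp_mul_left_Ioi' _ _ (inv_pos.2 hc),
    setIntegral_congr_fun measurableSet_Ioi fun ρ (hρ : 1 < ρ) ↦
      powerLawIntegrand_inv_mul hc (by linarith : (0 : ℝ) ≤ ρ),
    integral_const_mul, hcb, hexp, smul_eq_mul, mul_assoc]

lemma tendsto_rpow_neg_atTop_nhdsGT_zero {y : ℝ} (hy : 0 < y) :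
    Tendsto (fun x : ℝ ↦ x ^ (-y)) atTop (𝓝[>] 0) :=
  tendsto_nhdsWithin_iff.2 ⟨tendsto_rpow_neg_atTop hy,
    (eventually_gt_atTop 0).mono fun _ hx ↦ Real.rpow_pos_of_pos hx _⟩

end PowerLawLearningCurve

open PowerLawLearningCurve

/-- for `b > 0`, `a > 1`, `a − 1 < 2b`, the integral
`C = ∫₀^∞ u^{−a}(1 + u^{−b})⁻² du` is finite and
`s^{(a−1)/b} · ∫₁^∞ ρ^{−a}(1 + sρ^{−b})⁻² dρ → C` as `s → ∞`; i.e. in this regime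
the power-law learning curve decays like `s^{−(a−1)/b}`. -/
theorem power_law_learning_curve_high_freq (a b : ℝ) (hb : 0 < b) (ha : 1 < a)
    (hab : a - 1 < 2 * b) :
    IntegrableOn (fun u : ℝ => u ^ (-a) * ((1 + u ^ (-b)) ^ 2)⁻¹) (Set.Ioi 0) ∧
    Tendsto
      (fun s : ℝ =>
        s ^ ((a - 1) / b) * ∫ ρ in Set.Ioi (1 : ℝ), ρ ^ (-a) * ((1 + s * ρ ^ (-b)) ^ 2)⁻¹)
      atTop
      (nhds (∫ u in Set.Ioi (0 : ℝ), u ^ (-a) * ((1 + u ^ (-b)) ^ 2)⁻¹)) := by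
  have hint : IntegrableOn (powerLawIntegrand a b) (Ioi 0) :=
    integrableOn_powerLawIntegrand ha hab
  have hcutoff : Tendsto (fun s : ℝ ↦ s ^ (-b⁻¹)) atTop (𝓝[≥] 0) :=
    (tendsto_rpow_neg_atTop_nhdsGT_zero (inv_pos.2 hb)).mono_right
      (nhdsWithin_mono _ Ioi_subset_Ici_self)
  refine ⟨hint, (hint.continuousWithinAt_Ici_primitive_Ioi.tendsto.comp hcutoff).congr' ?_⟩
  filter_upwards [eventually_gt_atTop 0] with s hs
  exact (rpow_mul_integral_Ioi_one_eq a hb.ne' hs).symm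
end
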